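/- Suppose each of n keys is hashed 4-wise independently and uniformly into a table of size t with n ≤ (2/3)t, where t is a power of two. For any dyadic interval I of length 2^ℓ contained in [t], the probability that at least (3/4)·2^ℓ keys hash into I is at most 40000/2^{2ℓ}. -/

import Mathlib

/-!
Let `X = ∑ᵢ (1_{Aᵢ} - P(Aᵢ))` be the centred number of keys hashing into `I`, where
`Aᵢ = {h(i) ∈ I}`. Expanding `E[X⁴]` over quadruples of keys, a quadruple in which some key occurs
exactly once contributes nothing, by 4-wise independence and centring; only the diagonal `(i,i,i,i)`
and the three pairings of `(i,i,j,j)` survive. Hence `E[X⁴] ≤ m + 3m²` with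
`m = E[#keys in I] ≤ (2/3)·2^ℓ`, and Markov's inequality for `X⁴` at level `2^ℓ/12` bounds the
probability by `12⁴ (m + 3m²) / 2^{4ℓ} ≤ 40000 / 2^{2ℓ}` once `ℓ ≥ 1`.
-/

open MeasureTheory ProbabilityTheory Finset

section

variable {Ω ι β : Type*} [MeasurableSpace Ω] {μ : Measure Ω}

def KWiseIndepFun [MeasurableSpace β] (k : ℕ) (f : ι → Ω → β) (μ : Measure Ω) : Prop :=
  ∀ s : Finset ι, #s ≤ k → iIndepFun (fun i : s => f i) μ

section

variable [DecidableEq ι]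

/-- Bound for `E[Zᵢ Zⱼ Zₖ Zₗ]` when the `Zᵢ` are centred and 4-wise independent: only the
diagonal and the three pairings of `(i, j, k, l)` contribute. -/
noncomputable def pairingBound (Z : ι → Ω → ℝ) (μ : Measure Ω) (i j k l : ι) : ℝ :=
  (if i = j ∧ j = k ∧ k = l then ∫ ω, Z i ω ^ 4 ∂μ else 0) +
    (if i = j ∧ k = l then (∫ ω, Z i ω ^ 2 ∂μ) * ∫ ω, Z k ω ^ 2 ∂μ else 0) +
    (if i = k ∧ j = l then (∫ ω, Z i ω ^ 2 ∂μ) * ∫ ω, Z j ω ^ 2 ∂μ else 0) +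
    (if i = l ∧ j = k then (∫ ω, Z i ω ^ 2 ∂μ) * ∫ ω, Z j ω ^ 2 ∂μ else 0)

theorem pairingBound_nonneg (Z : ι → Ω → ℝ) (μ : Measure Ω) (i j k l : ι) :
    0 ≤ pairingBound Z μ i j k l := by
  have hsq (x : ι) : 0 ≤ ∫ ω, Z x ω ^ 2 ∂μ := integral_nonneg fun ω => sq_nonneg _
  have := hsq i; have := hsq j; have := hsq k
  unfold pairingBound
  split_ifs <;> positivity

theorem sum_pairingBound [Fintype ι] (Z : ι → Ω → ℝ) (μ : Measure Ω) :
    ∑ l, ∑ k, ∑ j, ∑ i, pairingBound Z μ i j k l =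
      ∑ i, ∫ ω, Z i ω ^ 4 ∂μ + 3 * (∑ i, ∫ ω, Z i ω ^ 2 ∂μ) ^ 2 := by
  simp only [pairingBound, ite_and, sq, sum_add_distrib, sum_ite_eq', mem_univ, ↓reduceIte,
    sum_ite_irrel, sum_const_zero, sum_mul_sum]
  rw [sum_comm]
  ring

end

namespace KWiseIndepFun

variable {k : ℕ}

theorem comp {γ : Type*} [MeasurableSpace β] [MeasurableSpace γ] {f : ι → Ω → β}
    (h : KWiseIndepFun k f μ) (g : ι → β → γ) (hg : ∀ i, Measurable (g i)) :
    KWiseIndepFun k (fun i => g i ∘ f i) μ :=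
  fun s hs => (h s hs).comp (fun i => g i) fun i => hg i

theorem indepFun_finset [MeasurableSpace β] [DecidableEq ι] {f : ι → Ω → β}
    (h : KWiseIndepFun k f μ) (hf : ∀ i, AEMeasurable (f i) μ) {S T : Finset ι}
    (hST : Disjoint S T) (hcard : #(S ∪ T) ≤ k) :
    IndepFun (fun ω (i : S) => f i ω) (fun ω (i : T) => f i ω) μ := by
  set U := S ∪ T
  have hST' : Disjoint (S.subtype (· ∈ U)) (T.subtype (· ∈ U)) := by
    rw [disjoint_left] at hST ⊢
    intro x hxS hxT
    exact hST (mem_subtype.1 hxS) (mem_subtype.1 hxT)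
  refine ((h U hcard).indepFun_finset₀ _ _ hST' fun i => hf i).comp
    (φ := fun v (i : S) => v ⟨⟨i, mem_union_left _ i.2⟩, by simp⟩)
    (ψ := fun v (i : T) => v ⟨⟨i, mem_union_right _ i.2⟩, by simp⟩) ?_ ?_
  · exact measurable_pi_lambda _ fun i => measurable_pi_apply _
  · exact measurable_pi_lambda _ fun i => measurable_pi_apply _

variable [DecidableEq ι] {Z : ι → Ω → ℝ}

theorem integral_mul_eq_zero_of_notMem (h : KWiseIndepFun k Z μ) (hk : 4 ≤ k)
    (hZ : ∀ i, AEMeasurable (Z i) μ) {m c d e : ι} (hm : m ∉ ({c, d, e} : Finset ι))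
    (h0 : ∫ ω, Z m ω ∂μ = 0) :
    ∫ ω, Z m ω * (Z c ω * Z d ω * Z e ω) ∂μ = 0 := by
  have hcard : #({m} ∪ {c, d, e} : Finset ι) ≤ k := by
    rw [← insert_eq]
    exact card_le_four.trans hk
  have hφ : Measurable fun v : ({m} : Finset ι) → ℝ => v ⟨m, mem_singleton_self m⟩ :=
    measurable_pi_apply _
  have hψ : Measurable fun v : ({c, d, e} : Finset ι) → ℝ =>
      v ⟨c, by simp⟩ * v ⟨d, by simp⟩ * v ⟨e, by simp⟩ := by fun_prop
  have hind := (h.indepFun_finset hZ (disjoint_singleton_left.2 hm) hcard).comp hφ hψ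
  simpa [h0] using hind.integral_mul_eq_mul_integral (hZ m).aestronglyMeasurable
    ((hZ c).mul (hZ d) |>.mul (hZ e)).aestronglyMeasurable

theorem integral_sq_mul_sq (h : KWiseIndepFun k Z μ) (hk : 2 ≤ k)
    (hZ : ∀ i, AEMeasurable (Z i) μ) {i j : ι} (hij : i ≠ j) :
    ∫ ω, Z i ω ^ 2 * Z j ω ^ 2 ∂μ = (∫ ω, Z i ω ^ 2 ∂μ) * ∫ ω, Z j ω ^ 2 ∂μ := by
  have hcard : #({i} ∪ {j} : Finset ι) ≤ k := (card_union_le _ _).trans (by simpa using hk)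
  have hsq (x : ι) :
      Measurable fun v : ({x} : Finset ι) → ℝ => v ⟨x, mem_singleton_self x⟩ ^ 2 := by
    fun_prop
  have hind := (h.indepFun_finset hZ (disjoint_singleton.2 hij) hcard).comp (hsq i) (hsq j)
  exact hind.integral_mul_eq_mul_integral ((hZ i).pow_const 2).aestronglyMeasurable
    ((hZ j).pow_const 2).aestronglyMeasurable

theorem _root_.Finset.notMem_or_pairing (i j k l : ι) :
    i ∉ ({j, k, l} : Finset ι) ∨ j ∉ ({i, k, l} : Finset ι) ∨ k ∉ ({i, j, l} : Finset ι) ∨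
      l ∉ ({i, j, k} : Finset ι) ∨ (i = j ∧ j = k ∧ k = l) ∨ (i = j ∧ k = l ∧ i ≠ k) ∨
      (i = k ∧ j = l ∧ i ≠ j) ∨ (i = l ∧ j = k ∧ i ≠ j) := by
  simp only [mem_insert, mem_singleton]
  grind

theorem integral_mul_mul_mul_le_pairingBound (h : KWiseIndepFun 4 Z μ)
    (hZ : ∀ i, AEMeasurable (Z i) μ) (h0 : ∀ i, ∫ ω, Z i ω ∂μ = 0) (i j k l : ι) :
    ∫ ω, Z i ω * Z j ω * Z k ω * Z l ω ∂μ ≤ pairingBound Z μ i j k l := by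
  have hzero {m c d e : ι} (hm : m ∉ ({c, d, e} : Finset ι))
      (hperm : ∀ ω, Z i ω * Z j ω * Z k ω * Z l ω = Z m ω * (Z c ω * Z d ω * Z e ω)) :
      ∫ ω, Z i ω * Z j ω * Z k ω * Z l ω ∂μ ≤ pairingBound Z μ i j k l := by
    simp_rw [hperm, h.integral_mul_eq_zero_of_notMem le_rfl hZ hm (h0 m)]
    exact pairingBound_nonneg Z μ i j k l
  have hpair {x y : ι} (hxy : x ≠ y)
      (hperm : ∀ ω, Z i ω * Z j ω * Z k ω * Z l ω = Z x ω ^ 2 * Z y ω ^ 2) :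
      ∫ ω, Z i ω * Z j ω * Z k ω * Z l ω ∂μ = (∫ ω, Z x ω ^ 2 ∂μ) * ∫ ω, Z y ω ^ 2 ∂μ := by
    simp_rw [hperm]
    exact h.integral_sq_mul_sq (by norm_num) hZ hxy
  rcases notMem_or_pairing i j k l with hi | hj | hk | hl | ⟨rfl, rfl, rfl⟩ | ⟨rfl, rfl, hik⟩ |
    ⟨rfl, rfl, hij⟩ | ⟨rfl, rfl, hij⟩
  · exact hzero hi fun ω => by ring
  · exact hzero hj fun ω => by ring
  · exact hzero hk fun ω => by ring
  · exact hzero hl fun ω => by ring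
  · simp_rw [show ∀ ω, Z i ω * Z i ω * Z i ω * Z i ω = Z i ω ^ 4 from fun ω => by ring]
    simp only [pairingBound, and_self, if_true]
    linarith [mul_self_nonneg (∫ ω, Z i ω ^ 2 ∂μ)]
  · rw [hpair hik fun ω => by ring]
    simp [pairingBound, hik]
  · rw [hpair hij fun ω => by ring]
    simp [pairingBound, hij]
  · rw [hpair hij fun ω => by ring]
    simp [pairingBound, hij]

end KWiseIndepFun

instance : ENNReal.HolderTriple 4 4 2 :=
  ⟨by rw [show (4 : ENNReal) = 2 * 2 by norm_num, ENNReal.mul_inv (by simp) (by simp), ← mul_add,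
    ENNReal.inv_two_add_inv_two, mul_one]⟩

theorem MeasureTheory.MemLp.integrable_mul_mul_mul {f g u w : Ω → ℝ} (hf : MemLp f 4 μ)
    (hg : MemLp g 4 μ) (hu : MemLp u 4 μ) (hw : MemLp w 4 μ) :
    Integrable (fun ω => f ω * g ω * u ω * w ω) μ :=
  ((hg.mul' (r := 2) hf).integrable_mul (hw.mul' (r := 2) hu)).congr
    (.of_forall fun ω => by simp only [Pi.mul_apply]; ring)

theorem KWiseIndepFun.integral_sum_pow_four_le [Fintype ι] {Z : ι → Ω → ℝ}
    (h : KWiseIndepFun 4 Z μ) (hZ : ∀ i, MemLp (Z i) 4 μ) (h0 : ∀ i, ∫ ω, Z i ω ∂μ = 0) :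
    ∫ ω, (∑ i, Z i ω) ^ 4 ∂μ ≤
      ∑ i, ∫ ω, Z i ω ^ 4 ∂μ + 3 * (∑ i, ∫ ω, Z i ω ^ 2 ∂μ) ^ 2 := by
  classical
  have hint (i j k l : ι) : Integrable (fun ω => Z i ω * Z j ω * Z k ω * Z l ω) μ :=
    (hZ i).integrable_mul_mul_mul (hZ j) (hZ k) (hZ l)
  have hexpand : ∫ ω, (∑ i, Z i ω) ^ 4 ∂μ =
      ∑ l, ∑ k, ∑ j, ∑ i, ∫ ω, Z i ω * Z j ω * Z k ω * Z l ω ∂μ := by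
    simp only [pow_succ, pow_zero, one_mul, sum_mul, mul_sum]
    simp (disch := intro _ _; fun_prop) only [integral_finsetSum]
  calc ∫ ω, (∑ i, Z i ω) ^ 4 ∂μ
      = ∑ l, ∑ k, ∑ j, ∑ i, ∫ ω, Z i ω * Z j ω * Z k ω * Z l ω ∂μ := hexpand
    _ ≤ ∑ l, ∑ k, ∑ j, ∑ i, pairingBound Z μ i j k l := by
      gcongr with l _ k _ j _ i _
      exact h.integral_mul_mul_mul_le_pairingBound
        (fun i => (hZ i).aestronglyMeasurable.aemeasurable) h0 i j k l
    _ = ∑ i, ∫ ω, Z i ω ^ 4 ∂μ + 3 * (∑ i, ∫ ω, Z i ω ^ 2 ∂μ) ^ 2 := sum_pairingBound Z μ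

theorem integral_indicator_sub_pow [IsProbabilityMeasure μ] {A : Set Ω} (hA : MeasurableSet A)
    (k : ℕ) :
    ∫ ω, (A.indicator 1 ω - μ.real A) ^ k ∂μ =
      μ.real A * (1 - μ.real A) ^ k + (1 - μ.real A) * (-μ.real A) ^ k := by
  have hpt : (fun ω => (A.indicator 1 ω - μ.real A) ^ k) = fun ω =>
      A.indicator (fun _ => (1 - μ.real A) ^ k - (-μ.real A) ^ k) ω + (-μ.real A) ^ k := by
    funext ω
    by_cases hω : ω ∈ A <;> simp [hω, sub_eq_add_neg]
  rw [hpt, integral_add ((integrable_const _).indicator hA) (integrable_const _),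
    integral_indicator_const _ hA, integral_const, probReal_univ]
  simp only [smul_eq_mul]
  ring

theorem integral_indicator_sub_sq_le [IsProbabilityMeasure μ] {A : Set Ω}
    (hA : MeasurableSet A) :
    ∫ ω, (A.indicator 1 ω - μ.real A) ^ 2 ∂μ ≤ μ.real A := by
  have hp0 : 0 ≤ μ.real A := measureReal_nonneg
  have hp1 : μ.real A ≤ 1 := measureReal_le_one
  rw [integral_indicator_sub_pow hA]
  nlinarith

theorem integral_indicator_sub_pow_four_le [IsProbabilityMeasure μ] {A : Set Ω}
    (hA : MeasurableSet A) :
    ∫ ω, (A.indicator 1 ω - μ.real A) ^ 4 ∂μ ≤ μ.real A := by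
  set p := μ.real A
  have hp0 : 0 ≤ p := measureReal_nonneg
  have hq0 : 0 ≤ 1 - p := sub_nonneg.2 measureReal_le_one
  have hcubes : (1 - p) ^ 3 + p ^ 3 ≤ 1 := by
    nlinarith [pow_le_of_le_one hq0 (sub_le_self 1 hp0) (n := 3) (by norm_num),
      pow_le_of_le_one hp0 (sub_nonneg.1 hq0) (n := 3) (by norm_num)]
  calc ∫ ω, (A.indicator 1 ω - p) ^ 4 ∂μ = p * (1 - p) * ((1 - p) ^ 3 + p ^ 3) := by
        rw [integral_indicator_sub_pow hA]; ring
    _ ≤ p * (1 - p) * 1 := by gcongr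
    _ ≤ p := by nlinarith

theorem integral_sum_indicator_sub_pow_four_le [IsProbabilityMeasure μ] [Fintype ι]
    {A : ι → Set Ω} (hA : ∀ i, MeasurableSet (A i))
    (hind : KWiseIndepFun 4 (fun i => (A i).indicator (1 : Ω → ℝ)) μ) :
    ∫ ω, (∑ i, ((A i).indicator 1 ω - μ.real (A i))) ^ 4 ∂μ ≤
      ∑ i, μ.real (A i) + 3 * (∑ i, μ.real (A i)) ^ 2 := by
  have hZ : KWiseIndepFun 4 (fun i ω => (A i).indicator 1 ω - μ.real (A i)) μ :=
    hind.comp (fun i x => x - μ.real (A i)) fun i => by fun_prop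
  have hL4 (i : ι) : MemLp (fun ω => (A i).indicator 1 ω - μ.real (A i)) 4 μ :=
    ((memLp_const (1 : ℝ)).indicator (hA i)).sub (memLp_const _)
  have h0 (i : ι) : ∫ ω, ((A i).indicator 1 ω - μ.real (A i)) ∂μ = 0 := by
    simpa using (integral_indicator_sub_pow (hA i) 1).trans (by ring)
  calc _ ≤ ∑ i, ∫ ω, ((A i).indicator 1 ω - μ.real (A i)) ^ 4 ∂μ +
        3 * (∑ i, ∫ ω, ((A i).indicator 1 ω - μ.real (A i)) ^ 2 ∂μ) ^ 2 :=
        hZ.integral_sum_pow_four_le hL4 h0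
    _ ≤ ∑ i, μ.real (A i) + 3 * (∑ i, μ.real (A i)) ^ 2 := by
        have hsq : 0 ≤ ∑ i, ∫ ω, ((A i).indicator 1 ω - μ.real (A i)) ^ 2 ∂μ :=
          sum_nonneg fun i _ => integral_nonneg fun ω => sq_nonneg _
        gcongr with i _ i _
        exacts [integral_indicator_sub_pow_four_le (hA i), integral_indicator_sub_sq_le (hA i)]

theorem measureReal_le_integral_pow_div [IsFiniteMeasure μ] {X : Ω → ℝ} {n : ℕ} (hn : Even n)
    (hX : MemLp X n μ) {c : ℝ} (hc : 0 < c) :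
    μ.real {ω | c ≤ X ω} ≤ (∫ ω, X ω ^ n ∂μ) / c ^ n := by
  have hint : Integrable (fun ω => X ω ^ n) μ := by
    simpa only [Real.norm_eq_abs, hn.pow_abs] using hX.integrable_norm_pow'
  have hsub : {ω | c ≤ X ω} ⊆ {ω | c ^ n ≤ X ω ^ n} := fun ω hω => pow_le_pow_left₀ hc.le hω n
  rw [le_div_iff₀ (pow_pos hc n), mul_comm]
  calc c ^ n * μ.real {ω | c ≤ X ω} ≤ c ^ n * μ.real {ω | c ^ n ≤ X ω ^ n} :=
        mul_le_mul_of_nonneg_left (measureReal_mono hsub) (by positivity)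
    _ ≤ ∫ ω, X ω ^ n ∂μ :=
        mul_meas_ge_le_integral_of_nonneg (.of_forall fun ω => hn.pow_nonneg _) hint _

theorem measureReal_sum_add_le_card_le [IsProbabilityMeasure μ] [Fintype ι]
    {P : ι → Ω → Prop} [∀ i ω, Decidable (P i ω)] (hP : ∀ i, MeasurableSet {ω | P i ω})
    (hind : KWiseIndepFun 4 (fun i => {ω | P i ω}.indicator (1 : Ω → ℝ)) μ) {c : ℝ} (hc : 0 < c) :
    μ.real {ω | ∑ i, μ.real {ω | P i ω} + c ≤ #{i | P i ω}} ≤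
      (∑ i, μ.real {ω | P i ω} + 3 * (∑ i, μ.real {ω | P i ω}) ^ 2) / c ^ 4 := by
  set X : Ω → ℝ := fun ω => ∑ i, ({ω | P i ω}.indicator 1 ω - μ.real {ω | P i ω})
  have hX (ω : Ω) : X ω = #{i | P i ω} - ∑ i, μ.real {ω | P i ω} := by
    simp only [X]
    rw [sum_sub_distrib, natCast_card_filter]
    congr 1
    refine sum_congr rfl fun i _ => ?_
    by_cases hω : P i ω <;> simp [hω]
  have hL4 : MemLp X (4 : ℕ) μ :=
    memLp_finsetSum _ fun i _ => ((memLp_const (1 : ℝ)).indicator (hP i)).sub (memLp_const _)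
  have hsub : {ω | ∑ i, μ.real {ω | P i ω} + c ≤ (#{i | P i ω} : ℝ)} ⊆ {ω | c ≤ X ω} := by
    intro ω hω
    simp only [Set.mem_ofPred_eq, hX] at hω ⊢
    linarith
  calc _ ≤ μ.real {ω | c ≤ X ω} := measureReal_mono hsub
    _ ≤ (∫ ω, X ω ^ 4 ∂μ) / c ^ 4 := measureReal_le_integral_pow_div (by decide) hL4 hc
    _ ≤ _ := by
        gcongr
        exact integral_sum_indicator_sub_pow_four_le hP hind

theorem measureReal_preimage_Ico_of_uniform {H : Ω → ℕ} (hH : Measurable H) {t : ℕ}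
    (hunif : ∀ y < t, μ {ω | H ω = y} = (t : ENNReal)⁻¹) {u v : ℕ} (hv : v ≤ t) :
    μ.real (H ⁻¹' Set.Ico u v) = (v - u : ℕ) / t := by
  have hfiber : ∀ y ∈ Ico u v, μ (H ⁻¹' {y}) = (t : ENNReal)⁻¹ := fun y hy =>
    hunif y ((mem_Ico.1 hy).2.trans_le hv)
  rw [← coe_Ico, measureReal_def,
    ← sum_measure_preimage_singleton _ fun y _ => hH (measurableSet_singleton y),
    sum_congr rfl hfiber, sum_const, Nat.card_Ico, nsmul_eq_mul, ENNReal.toReal_mul,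
    ENNReal.toReal_inv, ENNReal.toReal_natCast, ENNReal.toReal_natCast, div_eq_mul_inv]

theorem add_three_mul_sq_div_pow_four_le {R m : ℝ} (hR : 2 ≤ R) (hm0 : 0 ≤ m)
    (hm : m ≤ 2 / 3 * R) :
    (m + 3 * m ^ 2) / (R / 12) ^ 4 ≤ 40000 / R ^ 2 := by
  have hR0 : 0 < R := by linarith
  rw [div_le_div_iff₀ (by positivity) (by positivity)]
  have h1 : m * R ^ 2 ≤ 2 / 3 * R * R ^ 2 := by gcongr
  have h2 : m ^ 2 * R ^ 2 ≤ (2 / 3 * R) ^ 2 * R ^ 2 := by gcongr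
  have h3 : 2 * R ^ 3 ≤ R * R ^ 3 := by gcongr
  nlinarith

end

theorem stmt14_general {Ω : Type*} [MeasurableSpace Ω] (μ : Measure Ω) [IsProbabilityMeasure μ]
    (n t : ℕ) (hload : 3 * n ≤ 2 * t)
    (H : Fin n → Ω → ℕ) (hmeas : ∀ i, Measurable (H i))
    (hunif : ∀ (i : Fin n) (y : ℕ), y < t → μ {ω | H i ω = y} = (t : ENNReal)⁻¹)
    (hind : ∀ s : Finset (Fin n), s.card ≤ 4 →
      iIndepFun (fun i : s => H i.1) μ)
    (ℓ a : ℕ) (hI : (a + 1) * 2 ^ ℓ ≤ t) :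
    (μ {ω | (3 : ℝ) / 4 * 2 ^ ℓ ≤
        ((Finset.univ.filter fun i : Fin n =>
          a * 2 ^ ℓ ≤ H i ω ∧ H i ω < (a + 1) * 2 ^ ℓ).card : ℝ)}).toReal ≤
      40000 / 2 ^ (2 * ℓ) := by
  rcases Nat.eq_zero_or_pos ℓ with rfl | hℓ
  · exact measureReal_le_one.trans (by norm_num)
  have hR : (2 : ℝ) ≤ 2 ^ ℓ := by simpa using pow_le_pow_right₀ one_le_two hℓ
  have hA (i : Fin n) :
      μ.real {ω | a * 2 ^ ℓ ≤ H i ω ∧ H i ω < (a + 1) * 2 ^ ℓ} = 2 ^ ℓ / t :=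
    (measureReal_preimage_Ico_of_uniform (hmeas i) (hunif i) hI).trans (by simp [add_mul])
  have hsum : ∑ i, μ.real {ω | a * 2 ^ ℓ ≤ H i ω ∧ H i ω < (a + 1) * 2 ^ ℓ} ≤ 2 / 3 * 2 ^ ℓ := by
    have ht : (2 : ℝ) ^ ℓ ≤ t := by exact_mod_cast (Nat.le_mul_of_pos_left _ a.succ_pos).trans hI
    have hload' : (3 : ℝ) * n ≤ 2 * t := by exact_mod_cast hload
    simp only [hA, sum_const, card_univ, Fintype.card_fin, nsmul_eq_mul]
    rw [mul_div_assoc', div_le_iff₀ (by linarith)]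
    nlinarith
  have htail := measureReal_sum_add_le_card_le
    (P := fun i ω => a * 2 ^ ℓ ≤ H i ω ∧ H i ω < (a + 1) * 2 ^ ℓ)
    (fun i => hmeas i measurableSet_Ico)
    (KWiseIndepFun.comp hind (fun _ => (Set.Ico (a * 2 ^ ℓ) ((a + 1) * 2 ^ ℓ)).indicator 1)
      fun _ => Measurable.of_discrete) (c := 2 ^ ℓ / 12) (by positivity)
  refine (measureReal_mono fun ω hω => ?_).trans (htail.trans ?_)
  · simp only [Set.mem_ofPred_eq] at hω ⊢
    linarith
  · rw [pow_mul']
    exact add_three_mul_sq_div_pow_four_le hR (sum_nonneg fun i _ => measureReal_nonneg) hsum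

/-- Suppose each of `n` keys is hashed 4-wise independently and uniformly into a table of
size `t` with `n ≤ (2/3)t`, where `t` is a power of two. For any dyadic interval
`I = [a·2^ℓ, (a+1)·2^ℓ)` contained in `[t]`, the probability that at least `(3/4)·2^ℓ`
keys hash into `I` is at most `40000/2^{2ℓ}`. -/
theorem stmt14 {Ω : Type*} [MeasurableSpace Ω] (μ : Measure Ω) [IsProbabilityMeasure μ]
    (n t : ℕ) (L : ℕ) (htpow : t = 2 ^ L) (hload : 3 * n ≤ 2 * t)
    (H : Fin n → Ω → ℕ) (hmeas : ∀ i, Measurable (H i))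
    (hrange : ∀ i ω, H i ω < t)
    (hunif : ∀ (i : Fin n) (y : ℕ), y < t → μ {ω | H i ω = y} = (t : ENNReal)⁻¹)
    (hind : ∀ s : Finset (Fin n), s.card ≤ 4 →
      iIndepFun (fun i : s => H i.1) μ)
    (ℓ a : ℕ) (hI : (a + 1) * 2 ^ ℓ ≤ t) :
    (μ {ω | (3 : ℝ) / 4 * 2 ^ ℓ ≤
        ((Finset.univ.filter fun i : Fin n =>
          a * 2 ^ ℓ ≤ H i ω ∧ H i ω < (a + 1) * 2 ^ ℓ).card : ℝ)}).toReal ≤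
      40000 / 2 ^ (2 * ℓ) :=
  stmt14_general μ n t hload H hmeas hunif hind ℓ a hI
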